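/- arXiv:2604.02747 — 2 statements merged into one kernel-verified Lean document; each statement's English description precedes it below -/
import Mathlib

section
/- Let m(d) = f + g·d + (1/2)d·H·d + (σ/3)‖d‖³ be a cubic model with σ > 0, and suppose u is a point with m(u) ≤ m(-α g) for all α ≥ 0 (i.e., u achieves at least the Cauchy-point reduction). Then m(0) - m(u) ≥ (3/10)‖g‖ · min{‖g‖/(1+‖H‖), √(‖g‖/σ)}. -/
open Matrix Real BigOperators RealInnerProductSpace

/-- Euclidean norm of a finite-dimensional real vector. -/
noncomputable def eunorm {ι : Type*} [Fintype ι] (x : ι → ℝ) : ℝ :=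
  Real.sqrt (∑ i, x i ^ 2)

/-- ℓ¹ norm of a finite-dimensional real vector. -/
noncomputable def l1norm {ι : Type*} [Fintype ι] (x : ι → ℝ) : ℝ :=
  ∑ i, |x i|

/-- Spectral (ℓ²-operator) norm of a square matrix. -/
noncomputable def opNorm {n : ℕ} (A : Matrix (Fin n) (Fin n) ℝ) : ℝ :=
  sSup {r : ℝ | ∃ x : Fin n → ℝ, eunorm x = 1 ∧ r = eunorm (A.mulVec x)}

/-!
Along the steepest-descent ray, with `t = α ‖g‖`, the model decreases by
`m 0 - m (-α g) ≥ ‖g‖ t - ‖H‖ t² / 2 - σ t³ / 3`, using `⟨g, H g⟩ ≤ ‖H‖ ‖g‖²`.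
At `t = r / 2` with `r = min (‖g‖ / (1 + ‖H‖)) √(‖g‖ / σ)` one has `‖H‖ r ≤ ‖g‖` and `σ r² ≤ ‖g‖`,
so the right-hand side is at least `‖g‖ r / 3`. Since `u` does at least as well as every point
of the ray, the bound follows.
-/

section EuclideanNorm

variable {ι : Type*} [Fintype ι]

lemma eunorm_eq_norm_toLp (x : ι → ℝ) : eunorm x = ‖WithLp.toLp 2 x‖ := by
  simp [eunorm, EuclideanSpace.norm_eq]

lemma eunorm_nonneg (x : ι → ℝ) : 0 ≤ eunorm x :=
  Real.sqrt_nonneg _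

lemma eunorm_smul (c : ℝ) (x : ι → ℝ) : eunorm (c • x) = |c| * eunorm x := by
  simp only [eunorm_eq_norm_toLp, WithLp.toLp_smul, norm_smul, Real.norm_eq_abs]

lemma eunorm_neg (x : ι → ℝ) : eunorm (-x) = eunorm x := by
  simp only [eunorm_eq_norm_toLp, WithLp.toLp_neg, norm_neg]

lemma dotProduct_self_eq_eunorm_sq (x : ι → ℝ) : x ⬝ᵥ x = eunorm x ^ 2 := by
  rw [eunorm_eq_norm_toLp, ← real_inner_self_eq_norm_sq, EuclideanSpace.inner_toLp_toLp]
  simp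

lemma dotProduct_le_eunorm_mul_eunorm (x y : ι → ℝ) : x ⬝ᵥ y ≤ eunorm x * eunorm y := by
  simpa [eunorm_eq_norm_toLp, EuclideanSpace.inner_toLp_toLp, dotProduct_comm] using
    real_inner_le_norm (WithLp.toLp 2 x) (WithLp.toLp 2 y)

end EuclideanNorm

section OperatorNorm

variable {n : ℕ}

lemma opNorm_nonneg (A : Matrix (Fin n) (Fin n) ℝ) : 0 ≤ opNorm A :=
  Real.sSup_nonneg fun _ ⟨_, _, hr⟩ ↦ hr ▸ eunorm_nonneg _

lemma eunorm_mulVec_le_norm_toEuclideanCLM (A : Matrix (Fin n) (Fin n) ℝ) (x : Fin n → ℝ) :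
    eunorm (A *ᵥ x) ≤ ‖Matrix.toEuclideanCLM (𝕜 := ℝ) A‖ * eunorm x := by
  simpa only [eunorm_eq_norm_toLp, Matrix.toEuclideanCLM_toLp] using
    (Matrix.toEuclideanCLM (𝕜 := ℝ) A).le_opNorm (WithLp.toLp 2 x)

lemma eunorm_mulVec_le (A : Matrix (Fin n) (Fin n) ℝ) (x : Fin n → ℝ) :
    eunorm (A *ᵥ x) ≤ opNorm A * eunorm x := by
  rcases (eunorm_nonneg x).eq_or_lt with hx | hx
  · simpa [← hx] using eunorm_mulVec_le_norm_toEuclideanCLM A x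
  have hbdd : BddAbove {r | ∃ y : Fin n → ℝ, eunorm y = 1 ∧ r = eunorm (A *ᵥ y)} :=
    ⟨_, fun _ ⟨y, hy, hr⟩ ↦
      hr ▸ (eunorm_mulVec_le_norm_toEuclideanCLM A y).trans_eq (by rw [hy, mul_one])⟩
  have hunit : (eunorm x)⁻¹ * eunorm (A *ᵥ x) ≤ opNorm A := by
    refine le_csSup hbdd ⟨(eunorm x)⁻¹ • x, ?_, ?_⟩
    · rw [eunorm_smul, abs_of_pos (inv_pos.mpr hx), inv_mul_cancel₀ hx.ne']
    · rw [Matrix.mulVec_smul, eunorm_smul, abs_of_pos (inv_pos.mpr hx)]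
  rwa [inv_mul_le_iff₀ hx, mul_comm] at hunit

lemma dotProduct_mulVec_le (A : Matrix (Fin n) (Fin n) ℝ) (x : Fin n → ℝ) :
    x ⬝ᵥ A *ᵥ x ≤ opNorm A * eunorm x ^ 2 :=
  calc x ⬝ᵥ A *ᵥ x ≤ eunorm x * eunorm (A *ᵥ x) := dotProduct_le_eunorm_mul_eunorm _ _
    _ ≤ eunorm x * (opNorm A * eunorm x) :=
        mul_le_mul_of_nonneg_left (eunorm_mulVec_le A x) (eunorm_nonneg x)
    _ = opNorm A * eunorm x ^ 2 := by ring

end OperatorNorm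

noncomputable def cubicModel {n : ℕ} (f σ : ℝ) (g : Fin n → ℝ) (H : Matrix (Fin n) (Fin n) ℝ)
    (d : Fin n → ℝ) : ℝ :=
  f + g ⬝ᵥ d + (1 / 2) * (d ⬝ᵥ H *ᵥ d) + (σ / 3) * eunorm d ^ 3

noncomputable def cauchyDecrease (G N σ t : ℝ) : ℝ :=
  G * t - N / 2 * t ^ 2 - σ / 3 * t ^ 3

lemma cubicModel_zero {n : ℕ} (f σ : ℝ) (g : Fin n → ℝ) (H : Matrix (Fin n) (Fin n) ℝ) :
    cubicModel f σ g H 0 = f := by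
  simp [cubicModel, eunorm]

lemma cauchyDecrease_le_cubicModel_sub {n : ℕ} (f σ : ℝ) (g : Fin n → ℝ)
    (H : Matrix (Fin n) (Fin n) ℝ) {α : ℝ} (hα : 0 ≤ α) :
    cauchyDecrease (eunorm g) (opNorm H) σ (α * eunorm g) ≤
      cubicModel f σ g H 0 - cubicModel f σ g H (-(α • g)) := by
  have hq := mul_le_mul_of_nonneg_left (dotProduct_mulVec_le H g) (sq_nonneg α)
  rw [cubicModel_zero]
  simp only [cubicModel, cauchyDecrease, Matrix.mulVec_neg, Matrix.mulVec_smul,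
    dotProduct_neg, neg_dotProduct, dotProduct_smul, smul_dotProduct, smul_eq_mul,
    dotProduct_self_eq_eunorm_sq, eunorm_neg, eunorm_smul, abs_of_nonneg hα]
  nlinarith

lemma le_cauchyDecrease {G N σ : ℝ} (hσ : 0 < σ) (hG : 0 ≤ G) (hN : 0 ≤ N) :
    3 / 10 * G * min (G / (1 + N)) √(G / σ) ≤
      cauchyDecrease G N σ (min (G / (1 + N)) √(G / σ) / 2) := by
  set r := min (G / (1 + N)) √(G / σ)
  have hr : 0 ≤ r := le_min (by positivity) (Real.sqrt_nonneg _)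
  have hrN : r * N ≤ G := by
    have := (le_div_iff₀ (by positivity)).mp (min_le_left (G / (1 + N)) √(G / σ))
    nlinarith
  have hrσ : σ * r ^ 2 ≤ G := by
    have := pow_le_pow_left₀ hr (min_le_right (G / (1 + N)) √(G / σ)) 2
    rw [Real.sq_sqrt (by positivity), le_div_iff₀ hσ] at this
    linarith
  unfold cauchyDecrease
  nlinarith [mul_le_mul_of_nonneg_left hrN hr, mul_le_mul_of_nonneg_left hrσ hr, mul_nonneg hr hG]

lemma exists_cauchyDecrease_ge {G N σ : ℝ} (hσ : 0 < σ) (hG : 0 ≤ G) (hN : 0 ≤ N) :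
    ∃ α, 0 ≤ α ∧ 3 / 10 * G * min (G / (1 + N)) √(G / σ) ≤ cauchyDecrease G N σ (α * G) := by
  rcases hG.eq_or_lt with rfl | hG
  · exact ⟨0, le_rfl, by simp [cauchyDecrease]⟩
  refine ⟨min (G / (1 + N)) √(G / σ) / 2 / G, by positivity, ?_⟩
  rw [div_mul_cancel₀ _ hG.ne']
  exact le_cauchyDecrease hσ hG.le hN

theorem stmt0_general {n : ℕ} (f σ : ℝ) (g u : Fin n → ℝ) (H : Matrix (Fin n) (Fin n) ℝ)
    (hσ : 0 < σ)
    (m : (Fin n → ℝ) → ℝ)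
    (hm : ∀ d, m d = f + g ⬝ᵥ d + (1 / 2) * (d ⬝ᵥ H.mulVec d) + (σ / 3) * (eunorm d) ^ 3)
    (hu : ∀ α : ℝ, 0 ≤ α → m u ≤ m (-(α • g))) :
    m 0 - m u ≥ (3 / 10) * eunorm g *
      min (eunorm g / (1 + opNorm H)) (Real.sqrt (eunorm g / σ)) := by
  obtain rfl : m = cubicModel f σ g H := funext hm
  obtain ⟨α, hα, hdecrease⟩ := exists_cauchyDecrease_ge hσ (eunorm_nonneg g) (opNorm_nonneg H)
  linarith [hu α hα, cauchyDecrease_le_cubicModel_sub f σ g H hα]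

theorem stmt0 {n : ℕ} (f σ : ℝ) (g u : Fin n → ℝ) (H : Matrix (Fin n) (Fin n) ℝ)
    (hH : H.IsSymm) (hσ : 0 < σ)
    (m : (Fin n → ℝ) → ℝ)
    (hm : ∀ d, m d = f + g ⬝ᵥ d + (1 / 2) * (d ⬝ᵥ H.mulVec d) + (σ / 3) * (eunorm d) ^ 3)
    (hu : ∀ α : ℝ, 0 ≤ α → m u ≤ m (-(α • g))) :
    m 0 - m u ≥ (3 / 10) * eunorm g *
      min (eunorm g / (1 + opNorm H)) (Real.sqrt (eunorm g / σ)) :=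
  stmt0_general f σ g u H hσ m hm hu
end

section
/- Let m(u) = f + g·u + (1/2)u·H·u + (σ/3)‖u‖³ with σ > 0, and suppose u satisfies ∇m(u)·u ≤ δσ‖u‖³ for δ ∈ (0, 1/6). Then m(0) - m(u) ≥ (1/2)u·H·u + (2/3 - δ)σ‖u‖³. -/
/-!
Pairing the gradient with `u` gives `g ⬝ᵥ u + u ⬝ᵥ H u + σ‖u‖³ ≤ δσ‖u‖³`, and eliminating `g ⬝ᵥ u`
from `m 0 - m u = -g ⬝ᵥ u - ½ u ⬝ᵥ H u - (σ/3)‖u‖³` yields the bound.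
-/

open Matrix Real BigOperators RealInnerProductSpace

section

variable {ι : Type*} [Fintype ι]

lemma eunorm_zero : eunorm (0 : ι → ℝ) = 0 := by
  simp [eunorm]

lemma eunorm_sq (x : ι → ℝ) : eunorm x ^ 2 = x ⬝ᵥ x := by
  rw [eunorm, Real.sq_sqrt (Finset.sum_nonneg fun i _ => sq_nonneg _)]
  simp only [dotProduct, sq]

lemma cubicGrad_dotProduct_self (σ : ℝ) (g u : ι → ℝ) (H : Matrix ι ι ℝ) :
    (g + H *ᵥ u + (σ * eunorm u) • u) ⬝ᵥ u = g ⬝ᵥ u + u ⬝ᵥ H *ᵥ u + σ * eunorm u ^ 3 := by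
  rw [add_dotProduct, add_dotProduct, smul_dotProduct, dotProduct_comm (H *ᵥ u), ← eunorm_sq,
    smul_eq_mul]
  ring

end

theorem stmt2_general {n : ℕ} (f σ δ : ℝ) (g u : Fin n → ℝ) (H : Matrix (Fin n) (Fin n) ℝ)
    (m : (Fin n → ℝ) → ℝ)
    (hm : ∀ d, m d = f + g ⬝ᵥ d + (1 / 2) * (d ⬝ᵥ H.mulVec d) + (σ / 3) * (eunorm d) ^ 3)
    (hgradu : (g + H.mulVec u + (σ * eunorm u) • u) ⬝ᵥ u ≤ δ * σ * (eunorm u) ^ 3) :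
    m 0 - m u ≥ (1 / 2) * (u ⬝ᵥ H.mulVec u) + (2 / 3 - δ) * σ * (eunorm u) ^ 3 := by
  have hm0 : m 0 = f := by simp [hm, eunorm_zero]
  rw [cubicGrad_dotProduct_self] at hgradu
  rw [hm u, hm0]
  linarith

theorem stmt2 {n : ℕ} (f σ δ : ℝ) (g u : Fin n → ℝ) (H : Matrix (Fin n) (Fin n) ℝ)
    (hH : H.IsSymm) (hσ : 0 < σ) (hδ0 : 0 < δ) (hδ1 : δ < 1 / 6)
    (m : (Fin n → ℝ) → ℝ)
    (hm : ∀ d, m d = f + g ⬝ᵥ d + (1 / 2) * (d ⬝ᵥ H.mulVec d) + (σ / 3) * (eunorm d) ^ 3)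
    (hgradu : (g + H.mulVec u + (σ * eunorm u) • u) ⬝ᵥ u ≤ δ * σ * (eunorm u) ^ 3) :
    m 0 - m u ≥ (1 / 2) * (u ⬝ᵥ H.mulVec u) + (2 / 3 - δ) * σ * (eunorm u) ^ 3 :=
  stmt2_general f σ δ g u H m hm hgradu
end
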